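/- arXiv:2507.15105 — 6 statements merged into one kernel-verified Lean document; each statement's English description precedes it below -/
import Mathlib

section
/- Let (U_n : n ∈ ℤ₊) be a sequence of nonempty subsets of a compact metric space K. Suppose that for every ε > 0 there exists f(ε) ∈ ℤ₊ such that for every n ≥ f(ε) there exists f(n,ε) ∈ ℤ₊ with the property that for all m ≥ f(n,ε) we have U_n ⊆ U_m^ε (the ε-neighborhood of U_m). Then (U_n) is a Cauchy sequence in the Hausdorff distance. -/
/-! The hyperspace of closed subsets of a compact space is compact, so passing to closures some
subsequence `U (φ k)` converges in the Hausdorff sense to a set `A`. The one-sided hypothesis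
upgrades this to convergence of the whole sequence: for large `m`, `U m` lies near some far-out
`U (φ k)`, hence near `A`; and `A` lies near one fixed `U (φ k)`, which in turn lies near every
`U m` with `m` large. A convergent sequence is Cauchy. -/

open Metric Filter TopologicalSpace

section Thickening

variable {X : Type*} [PseudoEMetricSpace X] {s t u : Set X} {r r' : ℝ}

lemma subset_cthickening_of_hausdorffEDist_le (h : hausdorffEDist s t ≤ ENNReal.ofReal r) :
    s ⊆ cthickening r t :=
  fun _ hx => mem_cthickening_iff.2 ((infEDist_le_hausdorffEDist_of_mem hx).trans h)

lemma subset_cthickening_trans (hr : 0 ≤ r) (hr' : 0 ≤ r') (hst : s ⊆ cthickening r t)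
    (htu : t ⊆ cthickening r' u) : s ⊆ cthickening (r + r') u :=
  hst.trans <| (cthickening_subset_of_subset r htu).trans (cthickening_cthickening_subset hr hr' u)

def HausdorffTendsto {ι : Type*} (U : ι → Set X) (l : Filter ι) (A : Set X) : Prop :=
  ∀ δ > 0, ∀ᶠ i in l, U i ⊆ cthickening δ A ∧ A ⊆ cthickening δ (U i)

lemma HausdorffTendsto.of_comp {ι κ : Type*} {U : ι → Set X} {A : Set X} {l : Filter ι}
    {l' : Filter κ} [l'.NeBot] {φ : κ → ι} (hφ : Tendsto φ l' l)
    (hA : HausdorffTendsto (U ∘ φ) l' A)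
    (hU : ∀ δ > 0, ∀ᶠ n in l, ∀ᶠ m in l, U n ⊆ cthickening δ (U m)) :
    HausdorffTendsto U l A := by
  intro ε hε
  have hδ : 0 < ε / 2 := half_pos hε
  rw [← add_halves ε]
  refine Eventually.and ?_ ?_
  · filter_upwards [hU _ hδ] with m hm
    obtain ⟨k, hmk, hkA⟩ := ((hφ.eventually hm).and (hA _ hδ)).exists
    exact subset_cthickening_trans hδ.le hδ.le hmk hkA.1
  · obtain ⟨k, hkU, hkA⟩ := ((hφ.eventually (hU _ hδ)).and (hA _ hδ)).exists
    filter_upwards [hkU] with m hkm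
    exact subset_cthickening_trans hδ.le hδ.le hkA.2 hkm

end Thickening

lemma exists_hausdorffTendsto_subseq {X : Type*} [EMetricSpace X] [CompactSpace X]
    (U : ℕ → Set X) :
    ∃ A : Set X, ∃ φ : ℕ → ℕ, StrictMono φ ∧ HausdorffTendsto (U ∘ φ) atTop A := by
  let V (n : ℕ) : Closeds X := ⟨closure (U n), isClosed_closure⟩
  obtain ⟨A, -, φ, hφ, hlim⟩ := isCompact_univ.tendsto_subseq (x := V) fun n => Set.mem_univ _
  refine ⟨A, φ, hφ, fun δ hδ => ?_⟩
  filter_upwards [EMetric.tendsto_nhds.1 hlim _ (ENNReal.ofReal_pos.2 hδ)] with k hk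
  have hkA : hausdorffEDist (U (φ k)) A ≤ ENNReal.ofReal δ := by
    simpa only [Function.comp_apply, Closeds.edist_eq, V, Closeds.coe_mk,
      hausdorffEDist_closure_left] using hk.le
  exact ⟨subset_cthickening_of_hausdorffEDist_le hkA,
    subset_cthickening_of_hausdorffEDist_le (hausdorffEDist_comm.trans_le hkA)⟩

lemma hausdorffDist_le_of_subset_cthickening {X : Type*} [PseudoMetricSpace X] {s t : Set X}
    {r : ℝ} (hr : 0 ≤ r) (hst : s ⊆ cthickening r t) (hts : t ⊆ cthickening r s) :
    hausdorffDist s t ≤ r :=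
  hausdorffDist_le_of_infDist hr
    (fun _ hx => ENNReal.toReal_le_of_le_ofReal hr (mem_cthickening_iff.1 (hst hx)))
    (fun _ hx => ENNReal.toReal_le_of_le_ofReal hr (mem_cthickening_iff.1 (hts hx)))

lemma HausdorffTendsto.eventually_hausdorffDist_le {X ι : Type*} [PseudoMetricSpace X]
    {U : ι → Set X} {l : Filter ι} {A : Set X} (h : HausdorffTendsto U l A) :
    ∀ ε > 0, ∀ᶠ p in l ×ˢ l, hausdorffDist (U p.1) (U p.2) ≤ ε := by
  intro ε hε
  have hδ : 0 < ε / 2 := half_pos hε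
  filter_upwards [(h _ hδ).prod_mk (h _ hδ)] with p ⟨⟨h₁A, hA₁⟩, ⟨h₂A, hA₂⟩⟩
  rw [← add_halves ε]
  exact hausdorffDist_le_of_subset_cthickening (add_pos hδ hδ).le
    (subset_cthickening_trans hδ.le hδ.le h₁A hA₂)
    (subset_cthickening_trans hδ.le hδ.le h₂A hA₁)

theorem stmt0_general {K : Type*} [MetricSpace K] [CompactSpace K]
    (U : ℕ → Set K)
    (h : ∀ ε : ℝ, 0 < ε → ∃ f : ℕ, ∀ n, f ≤ n → ∃ g : ℕ, ∀ m, g ≤ m →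
      U n ⊆ Metric.cthickening ε (U m)) :
    ∀ ε : ℝ, 0 < ε → ∃ N : ℕ, ∀ m, N ≤ m → ∀ n, N ≤ n →
      Metric.hausdorffDist (U m) (U n) ≤ ε := by
  have hU : ∀ δ > 0, ∀ᶠ n in atTop, ∀ᶠ m in atTop, U n ⊆ cthickening δ (U m) := by
    simpa only [eventually_atTop] using h
  obtain ⟨A, φ, hφ, hA⟩ := exists_hausdorffTendsto_subseq U
  simpa only [prod_atTop_atTop_eq, eventually_atTop_prod_self', ge_iff_le] using
    (hA.of_comp hφ.tendsto_atTop hU).eventually_hausdorffDist_le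

/-- Let `(Uₙ)` be a sequence of nonempty subsets of a compact metric
space `K`. Suppose that for every `ε > 0` there exists `f(ε)` such that for every
`n ≥ f(ε)` there exists `f(n,ε)` with `Uₙ ⊆ Uₘ^ε` for all `m ≥ f(n,ε)`.
Then `(Uₙ)` is Cauchy in the Hausdorff distance. -/
theorem stmt0 {K : Type*} [MetricSpace K] [CompactSpace K]
    (U : ℕ → Set K) (hne : ∀ n, (U n).Nonempty)
    (h : ∀ ε : ℝ, 0 < ε → ∃ f : ℕ, ∀ n, f ≤ n → ∃ g : ℕ, ∀ m, g ≤ m →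
      U n ⊆ Metric.cthickening ε (U m)) :
    ∀ ε : ℝ, 0 < ε → ∃ N : ℕ, ∀ m, N ≤ m → ∀ n, N ≤ n →
      Metric.hausdorffDist (U m) (U n) ≤ ε :=
  stmt0_general U h
end

section
/- Every increasing (with respect to inclusion) sequence of nonempty subsets of a compact metric space is a Cauchy sequence in the Hausdorff distance. -/
/-- Every increasing sequence of nonempty subsets of a compact metric
space is a Cauchy sequence in the Hausdorff distance. -/
theorem stmt1 {K : Type*} [MetricSpace K] [CompactSpace K]
    (U : ℕ → Set K) (hne : ∀ n, (U n).Nonempty)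
    (hmono : ∀ n, U n ⊆ U (n + 1)) :
    ∀ ε : ℝ, 0 < ε → ∃ N : ℕ, ∀ m, N ≤ m → ∀ n, N ≤ n →
      Metric.hausdorffDist (U m) (U n) ≤ ε := by
  intro ε hε
  have hMono : Monotone U := monotone_nat_of_le_succ hmono
  set S : Set K := ⋃ n, U n with hS
  have hTB : TotallyBounded S := (isCompact_univ.totallyBounded).subset (Set.subset_univ _)
  obtain ⟨t, htS, htfin, hcov⟩ := hTB.exists_subset (Metric.dist_mem_uniformity hε)
  -- for each y ∈ t, pick an index
  have hidx : ∀ y ∈ t, ∃ n, y ∈ U n := by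
    intro y hy
    exact Set.mem_iUnion.1 (htS hy)
  choose! idx hidxmem using hidx
  obtain ⟨N, hN'⟩ := (htfin.image idx).bddAbove
  have hN : ∀ y ∈ t, idx y ≤ N := fun y hy => hN' ⟨y, hy, rfl⟩
  · refine ⟨N, fun m hm n hn => ?_⟩
    have key : ∀ k, N ≤ k → ∀ x ∈ U k, ∃ y ∈ U N, dist x y ≤ ε := by
      intro k hk x hx
      have hxS : x ∈ S := Set.mem_iUnion.2 ⟨k, hx⟩
      obtain ⟨y, hy, hdy⟩ := Set.mem_iUnion₂.1 (hcov hxS)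
      refine ⟨y, hMono (hN y hy) (hidxmem y hy), le_of_lt hdy⟩
    refine Metric.hausdorffDist_le_of_mem_dist hε.le ?_ ?_
    · intro x hx
      obtain ⟨y, hy, hd⟩ := key m hm x hx
      exact ⟨y, hMono hn hy, hd⟩
    · intro x hx
      obtain ⟨y, hy, hd⟩ := key n hn x hx
      exact ⟨y, hMono hm hy, hd⟩
end

section
/- Let φ be a setfunction on a finite set algebra (J, 𝓑). For integers a ≥ k ≥ 1, T_k(φ) = Q_k(T_a(φ)), where Q_k(T_a(φ)) denotes the union over ψ ∈ T_a(φ) of Q_k(ψ). That is, every k-crop of φ is a k-quotient of some a-crop of φ, and conversely. -/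
/-!
A `k`-crop `φ/C` is the quotient of the `a`-crop `φ/(C ∘ f)` by the fibres of any surjection
`f : [a] → [k]`, which exists because `1 ≤ k ≤ a`. Conversely, the quotient of an `a`-crop `φ/A`
by a partition `P` of `[a]` is the `k`-crop along the unions `⋃_{j ∈ P i} A j`, which stay in `B`
since `B` is closed under finite unions.
-/

/-- The `k`-crop of a setfunction `φ` along a tuple `A` of sets:
`(φ/A)(I) = φ(⋃_{i∈I} A_i)`. -/
def cropFn {J : Type*} (φ : Set J → ℝ) {k : ℕ} (A : Fin k → Set J) :
    Finset (Fin k) → ℝ :=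
  fun I => φ (⋃ i ∈ I, A i)

/-- The set `T_k(φ)` of `k`-crops of `φ`, over tuples of sets from the family `B`. -/
def crops {J : Type*} (B : Set (Set J)) (φ : Set J → ℝ) (k : ℕ) :
    Set (Finset (Fin k) → ℝ) :=
  {ψ | ∃ A : Fin k → Set J, (∀ i, A i ∈ B) ∧ ψ = cropFn φ A}

/-- The set `T_k(ψ)` of `k`-crops of a setfunction `ψ : 2^[a] → ℝ`. -/
def cropsFin {a : ℕ} (ψ : Finset (Fin a) → ℝ) (k : ℕ) :
    Set (Finset (Fin k) → ℝ) :=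
  {σ | ∃ P : Fin k → Finset (Fin a), σ = fun I => ψ (I.biUnion P)}

/-- The set `Q_k(ψ)` of `k`-quotients of a setfunction `ψ : 2^[a] → ℝ`, defined using
partitions of `[a]` into `k` (possibly empty) classes. -/
def quotientsFin {a : ℕ} (ψ : Finset (Fin a) → ℝ) (k : ℕ) :
    Set (Finset (Fin k) → ℝ) :=
  {σ | ∃ P : Fin k → Finset (Fin a), Pairwise (Function.onFun Disjoint P) ∧
      Finset.univ.biUnion P = Finset.univ ∧ σ = fun I => ψ (I.biUnion P)}

section

variable {J : Type*} (φ : Set J → ℝ)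

lemma biUnion_mem_of_union_mem {B : Set (Set J)} (hempty : ∅ ∈ B)
    (hunion : ∀ X Y, X ∈ B → Y ∈ B → X ∪ Y ∈ B) {ι : Type*} (S : Finset ι) {A : ι → Set J}
    (hA : ∀ i, A i ∈ B) : (⋃ i ∈ S, A i) ∈ B := by
  rw [← Finset.sup_set_eq_biUnion]
  exact Finset.sup_mem B hempty (fun X hX Y hY => hunion X Y hX hY) S A fun i _ => hA i

lemma cropFn_biUnion {a k : ℕ} (A : Fin a → Set J) (P : Fin k → Finset (Fin a)) :
    (fun I => cropFn φ A (I.biUnion P)) = cropFn φ fun i => ⋃ j ∈ P i, A j := by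
  funext I
  simp only [cropFn, Finset.set_biUnion_biUnion]

lemma cropFn_mem_quotientsFin_comp {a k : ℕ} (C : Fin k → Set J) {f : Fin a → Fin k}
    (hf : Function.Surjective f) : cropFn φ C ∈ quotientsFin (cropFn φ (C ∘ f)) k := by
  refine ⟨fun i => {j | f j = i}, ?_, ?_, ?_⟩
  · intro i i' hii'
    simp only [Function.onFun, Finset.disjoint_filter]
    rintro j - rfl
    exact hii'
  · exact Finset.biUnion_filter_eq_of_maps_to fun _ _ => Finset.mem_univ _
  · have hfibres : (fun i => ⋃ j ∈ ({j | f j = i} : Finset (Fin a)), (C ∘ f) j) = C := by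
      funext i
      obtain ⟨j₀, rfl⟩ := hf i
      ext x
      simp only [Finset.mem_filter, Finset.mem_univ, true_and, Function.comp_apply,
        Set.mem_iUnion, exists_prop]
      exact ⟨fun ⟨j, hj, hx⟩ => hj ▸ hx, fun hx => ⟨j₀, rfl, hx⟩⟩
    rw [cropFn_biUnion, hfibres]

end

theorem stmt2_general {J : Type*} (B : Set (Set J)) (φ : Set J → ℝ)
    (hempty : ∅ ∈ B)
    (hunion : ∀ X Y, X ∈ B → Y ∈ B → X ∪ Y ∈ B)
    (a k : ℕ) (hk : 1 ≤ k) (hka : k ≤ a) :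
    crops B φ k = ⋃ ψ ∈ crops B φ a, quotientsFin ψ k := by
  ext σ
  simp only [Set.mem_iUnion, exists_prop]
  constructor
  · rintro ⟨C, hC, rfl⟩
    have : Nonempty (Fin k) := Fin.pos_iff_nonempty.mp hk
    have hf := Function.invFun_surjective (Fin.castLE_injective hka)
    exact ⟨_, ⟨C ∘ _, fun _ => hC _, rfl⟩, cropFn_mem_quotientsFin_comp φ C hf⟩
  · rintro ⟨_, ⟨A, hA, rfl⟩, P, -, -, rfl⟩
    exact ⟨_, fun i => biUnion_mem_of_union_mem hempty hunion (P i) hA, cropFn_biUnion φ A P⟩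

/-- For a setfunction `φ` on a finite set algebra `(J, B)` and
`a ≥ k ≥ 1`, we have `T_k(φ) = Q_k(T_a(φ))`. -/
theorem stmt2 {J : Type*} [Finite J] (B : Set (Set J)) (φ : Set J → ℝ)
    (hempty : ∅ ∈ B) (huniv : Set.univ ∈ B)
    (hunion : ∀ X Y, X ∈ B → Y ∈ B → X ∪ Y ∈ B)
    (hinter : ∀ X Y, X ∈ B → Y ∈ B → X ∩ Y ∈ B)
    (hcompl : ∀ X, X ∈ B → Xᶜ ∈ B)
    (hφ : φ ∅ = 0)
    (a k : ℕ) (hk : 1 ≤ k) (hka : k ≤ a) :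
    crops B φ k = ⋃ ψ ∈ crops B φ a, quotientsFin ψ k :=
  stmt2_general B φ hempty hunion a k hk hka
end

section
/- If a sequence (φ_n) of setfunctions is quotient-convergent (i.e., for each k the quotient sets Q_k(φ_n) form a Cauchy sequence in Hausdorff distance), then it is crop-convergent (i.e., for each k the crop sets T_k(φ_n) form a Cauchy sequence in Hausdorff distance). -/
/-- The set `Q_k(φ)` of `k`-quotients of `φ`: crops along partitions of `J` into `k`
(possibly empty) sets from `B`. -/
def quotients {J : Type*} (B : Set (Set J)) (φ : Set J → ℝ) (k : ℕ) :
    Set (Finset (Fin k) → ℝ) :=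
  {ψ | ∃ A : Fin k → Set J, (∀ i, A i ∈ B) ∧ Pairwise (Function.onFun Disjoint A) ∧
      (⋃ i, A i) = Set.univ ∧ ψ = cropFn φ A}

open Set Metric MeasureTheory

section Lipschitz

variable {α β : Type*} {f : α → β}

theorem LipschitzWith.infEDist_image_le [PseudoEMetricSpace α] [PseudoEMetricSpace β]
    (hf : LipschitzWith 1 f) (x : α) (t : Set α) :
    infEDist (f x) (f '' t) ≤ infEDist x t := by
  simp only [infEDist, iInf_image]
  exact iInf₂_mono fun y _ => by simpa using hf x y

theorem LipschitzWith.hausdorffEDist_image_le [PseudoEMetricSpace α] [PseudoEMetricSpace β]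
    (hf : LipschitzWith 1 f) (s t : Set α) :
    hausdorffEDist (f '' s) (f '' t) ≤ hausdorffEDist s t := by
  refine hausdorffEDist_le_of_infEDist (forall_mem_image.2 fun x hx => ?_)
    (forall_mem_image.2 fun x hx => ?_)
  · exact (hf.infEDist_image_le x t).trans (infEDist_le_hausdorffEDist_of_mem hx)
  · rw [hausdorffEDist_comm]
    exact (hf.infEDist_image_le x s).trans (infEDist_le_hausdorffEDist_of_mem hx)

theorem LipschitzWith.hausdorffDist_image_le [PseudoMetricSpace α] [PseudoMetricSpace β]
    (hf : LipschitzWith 1 f) {s t : Set α} (hst : hausdorffEDist s t ≠ ⊤) :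
    hausdorffDist (f '' s) (f '' t) ≤ hausdorffDist s t :=
  ENNReal.toReal_mono hst (hf.hausdorffEDist_image_le s t)

theorem lipschitzWith_one_comp_right {ι κ : Type*} [Fintype ι] [Fintype κ]
    [PseudoEMetricSpace β] (g : ι → κ) :
    LipschitzWith 1 fun q : κ → β => q ∘ g :=
  LipschitzWith.of_edist_le fun q q' => edist_pi_le_iff.2 fun i => edist_le_pi_edist q q' (g i)

end Lipschitz

section Atoms

variable {J ι κ : Type*}

def atom (A : ι → Set J) (S : Finset ι) : Set J := {x | ∀ i, x ∈ A i ↔ i ∈ S}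

theorem exists_mem_atom [Fintype ι] (A : ι → Set J) (x : J) : ∃ S, x ∈ atom A S := by
  classical
  exact ⟨Finset.univ.filter fun i => x ∈ A i, by simp [atom]⟩

theorem atom_eq_biInter [Fintype ι] [DecidableEq ι] (A : ι → Set J) (S : Finset ι) :
    atom A S = ⋂ i ∈ Finset.univ, if i ∈ S then A i else (A i)ᶜ := by
  ext x
  simp only [atom, mem_ofPred_eq, Finset.mem_univ, iInter_true, mem_iInter]
  refine forall_congr' fun i => ?_
  split_ifs with hi <;> simp [hi]

theorem MeasureTheory.IsSetAlgebra.atom_mem [Fintype ι] {B : Set (Set J)} (hB : IsSetAlgebra B)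
    {A : ι → Set J} (hA : ∀ i, A i ∈ B) (S : Finset ι) : atom A S ∈ B := by
  classical
  rw [atom_eq_biInter]
  refine hB.biInter_mem _ fun i _ => ?_
  split_ifs
  · exact hA i
  · exact hB.compl_mem (hA i)

theorem pairwise_disjoint_atom (e : κ ≃ Finset ι) (A : ι → Set J) :
    Pairwise (Function.onFun Disjoint fun j => atom A (e j)) := by
  refine fun j j' hjj' => Set.disjoint_left.2 fun x hx hx' => hjj' (e.injective ?_)
  ext i
  rw [← hx i, hx' i]

theorem iUnion_atom [Fintype ι] (e : κ ≃ Finset ι) (A : ι → Set J) :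
    ⋃ j, atom A (e j) = univ :=
  eq_univ_of_forall fun x =>
    let ⟨S, hS⟩ := exists_mem_atom A x
    mem_iUnion.2 ⟨e.symm S, by rwa [e.apply_symm_apply]⟩

variable [DecidableEq ι] [Fintype κ]

def hitting (e : κ → Finset ι) (I : Finset ι) : Finset κ :=
  Finset.univ.filter fun j => ¬Disjoint (e j) I

theorem mem_hitting {e : κ → Finset ι} {I : Finset ι} {j : κ} :
    j ∈ hitting e I ↔ ∃ i ∈ I, i ∈ e j := by
  simp [hitting, Finset.not_disjoint_iff, and_comm]

theorem biUnion_eq_biUnion_hitting_atom [Fintype ι] (e : κ ≃ Finset ι) (A : ι → Set J)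
    (I : Finset ι) : ⋃ i ∈ I, A i = ⋃ j ∈ hitting e I, atom A (e j) := by
  ext x
  simp only [mem_iUnion, exists_prop, mem_hitting]
  constructor
  · rintro ⟨i, hiI, hx⟩
    obtain ⟨S, hS⟩ := exists_mem_atom A x
    exact ⟨e.symm S, ⟨i, hiI, by simpa using (hS i).1 hx⟩, by rwa [e.apply_symm_apply]⟩
  · rintro ⟨j, ⟨i, hiI, hij⟩, hx⟩
    exact ⟨i, hiI, (hx i).2 hij⟩

theorem biUnion_biUnion_eq_biUnion_hitting (e : κ → Finset ι) (P : κ → Set J)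
    (I : Finset ι) :
    ⋃ i ∈ I, ⋃ j ∈ Finset.univ.filter (fun j => i ∈ e j), P j = ⋃ j ∈ hitting e I, P j := by
  ext x
  simp only [mem_iUnion, exists_prop, mem_hitting, Finset.mem_filter, Finset.mem_univ, true_and]
  constructor
  · rintro ⟨i, hiI, j, hij, hx⟩
    exact ⟨j, ⟨i, hiI, hij⟩, hx⟩
  · rintro ⟨j, ⟨i, hiI, hij⟩, hx⟩
    exact ⟨i, hiI, j, hij, hx⟩

end Atoms

section CropsAndQuotients

variable {J : Type*} {B : Set (Set J)} {φ : Set J → ℝ}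

theorem quotients_subset_crops (k : ℕ) : quotients B φ k ⊆ crops B φ k :=
  fun _ ⟨A, hA, _, _, hψ⟩ => ⟨A, hA, hψ⟩

theorem crops_nonempty (hB : ∅ ∈ B) (k : ℕ) : (crops B φ k).Nonempty :=
  ⟨_, fun _ => ∅, fun _ => hB, rfl⟩

theorem isBounded_crops (hB : IsSetAlgebra B) {C : ℝ} (hφ : ∀ X ∈ B, |φ X| ≤ C) (k : ℕ) :
    Bornology.IsBounded (crops B φ k) := by
  have hC : 0 ≤ C := (abs_nonneg _).trans (hφ ∅ hB.empty_mem)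
  refine (isBounded_closedBall (x := 0) (r := C)).subset ?_
  rintro _ ⟨A, hA, rfl⟩
  exact mem_closedBall_zero_iff.2 <| (pi_norm_le_iff_of_nonneg hC).2 fun I =>
    hφ _ (hB.biUnion_mem I fun i _ => hA i)

theorem crops_eq_image_quotients (hB : IsSetAlgebra B) {k n : ℕ} (e : Fin n ≃ Finset (Fin k)) :
    crops B φ k = (fun q => q ∘ hitting e) '' quotients B φ n := by
  ext ψ
  constructor
  · rintro ⟨A, hA, rfl⟩
    refine ⟨cropFn φ fun j => atom A (e j), ⟨_, fun j => hB.atom_mem hA (e j),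
      pairwise_disjoint_atom e A, iUnion_atom e A, rfl⟩, ?_⟩
    funext I
    simp only [Function.comp_apply, cropFn, biUnion_eq_biUnion_hitting_atom e A I]
  · rintro ⟨_, ⟨P, hP, -, -, rfl⟩, rfl⟩
    refine ⟨fun i => ⋃ j ∈ Finset.univ.filter (fun j => i ∈ e j), P j,
      fun i => hB.biUnion_mem _ fun j _ => hP j, ?_⟩
    funext I
    simp only [Function.comp_apply, cropFn, biUnion_biUnion_eq_biUnion_hitting]

theorem quotients_nonempty (hB : IsSetAlgebra B) {k n : ℕ} (e : Fin n ≃ Finset (Fin k)) :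
    (quotients B φ n).Nonempty :=
  image_nonempty.1 (crops_eq_image_quotients hB e ▸ crops_nonempty hB.empty_mem k)

end CropsAndQuotients

theorem stmt4_general {J : Type*} (B : Set (Set J)) (φ : ℕ → Set J → ℝ)
    (hempty : ∅ ∈ B)
    (hunion : ∀ X Y, X ∈ B → Y ∈ B → X ∪ Y ∈ B)
    (hcompl : ∀ X, X ∈ B → Xᶜ ∈ B)
    (hbdd : ∃ C : ℝ, ∀ n X, X ∈ B → |φ n X| ≤ C)
    (hQ : ∀ k : ℕ, ∀ ε : ℝ, 0 < ε → ∃ N : ℕ, ∀ m, N ≤ m → ∀ n, N ≤ n →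
      Metric.hausdorffDist (quotients B (φ m) k) (quotients B (φ n) k) ≤ ε) :
    ∀ k : ℕ, ∀ ε : ℝ, 0 < ε → ∃ N : ℕ, ∀ m, N ≤ m → ∀ n, N ≤ n →
      Metric.hausdorffDist (crops B (φ m) k) (crops B (φ n) k) ≤ ε := by
  have hB : IsSetAlgebra B := ⟨hempty, hcompl, hunion⟩
  obtain ⟨C, hC⟩ := hbdd
  intro k ε hε
  obtain ⟨N, hN⟩ := hQ (2 ^ k) ε hε
  refine ⟨N, fun m hm n hn => ?_⟩
  let e : Fin (2 ^ k) ≃ Finset (Fin k) := (Fintype.equivFinOfCardEq (by simp)).symm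
  have hfin : hausdorffEDist (quotients B (φ m) (2 ^ k)) (quotients B (φ n) (2 ^ k)) ≠ ⊤ :=
    hausdorffEDist_ne_top_of_nonempty_of_bounded (quotients_nonempty hB e)
      (quotients_nonempty hB e) ((isBounded_crops hB (hC m) _).subset (quotients_subset_crops _))
      ((isBounded_crops hB (hC n) _).subset (quotients_subset_crops _))
  rw [crops_eq_image_quotients hB e, crops_eq_image_quotients hB e]
  exact ((lipschitzWith_one_comp_right _).hausdorffDist_image_le hfin).trans (hN m hm n hn)

/-- If a sequence of (uniformly bounded) setfunctions on a set algebra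
is quotient-convergent (for each `k`, the quotient sets form a Cauchy sequence in the
Hausdorff distance), then it is crop-convergent. -/
theorem stmt4 {J : Type*} (B : Set (Set J)) (φ : ℕ → Set J → ℝ)
    (hempty : ∅ ∈ B) (huniv : Set.univ ∈ B)
    (hunion : ∀ X Y, X ∈ B → Y ∈ B → X ∪ Y ∈ B)
    (hinter : ∀ X Y, X ∈ B → Y ∈ B → X ∩ Y ∈ B)
    (hcompl : ∀ X, X ∈ B → Xᶜ ∈ B)
    (hφ0 : ∀ n, φ n ∅ = 0)
    (hbdd : ∃ C : ℝ, ∀ n X, X ∈ B → |φ n X| ≤ C)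
    (hQ : ∀ k : ℕ, ∀ ε : ℝ, 0 < ε → ∃ N : ℕ, ∀ m, N ≤ m → ∀ n, N ≤ n →
      Metric.hausdorffDist (quotients B (φ m) k) (quotients B (φ n) k) ≤ ε) :
    ∀ k : ℕ, ∀ ε : ℝ, 0 < ε → ∃ N : ℕ, ∀ m, N ≤ m → ∀ n, N ≤ n →
      Metric.hausdorffDist (crops B (φ m) k) (crops B (φ n) k) ≤ ε :=
  stmt4_general B φ hempty hunion hcompl hbdd hQ
end

section
/- Let (M_n = (E_n, r_n) : n ∈ ℤ₊) be a sequence of finite matroids with r_n(E_n) = n and normalized rank functions ρ_n = r_n/n, with 𝓛_n the lattice of flats of M_n. Assume (i) for all m ≤ n there is a rank-preserving lattice embedding 𝓛_m → 𝓛_n, and (ii) if m divides n there is a stretch embedding 𝓛_m → 𝓛_n. Then for every k, the sequence of k-crop sets (T_k(ρ_n))_n converges in the Hausdorff distance to 𝐓_k = closure of ⋃_n T_k(ρ_n). -/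
/-!
Every `k`-crop set `T_k(ρₙ)` lies in the unit cube, so the closure of their union is compact.
Given `m ≤ n`, write `n = qm + s` with `s < m`. The stretch embedding `𝓛_m → 𝓛_{qm}` gives
`T_k(ρ_m) ⊆ T_k(ρ_{qm})`, and the rank-preserving embedding `𝓛_{qm} → 𝓛_n` gives
`(qm/n) · T_k(ρ_{qm}) ⊆ T_k(ρ_n)`, which moves points of the cube by at most `1 - qm/n < m/n`.
So every point of `T_k(ρ_m)` is within `m/n` of `T_k(ρ_n)`; covering the compact limit set by
finitely many small balls centred in the union makes this uniform.
-/

/-- The rank of a set `X` in a matroid `M`: the largest cardinality of an independent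
subset of `X`. -/
noncomputable def mrk {α : Type*} (M : Matroid α) (X : Set α) : ℕ :=
  sSup (Set.ncard '' {I | M.Indep I ∧ I ⊆ X})

/-- The set `T_k(ρ)` of `k`-crops of the normalized rank function `ρ = r/c` of a
matroid `M`, over `k`-tuples of subsets of the ground set. -/
noncomputable def matCrops {α : Type*} (M : Matroid α) (c : ℝ) (k : ℕ) :
    Set (Finset (Fin k) → ℝ) :=
  {ψ | ∃ A : Fin k → Set α, (∀ i, A i ⊆ M.E) ∧
      ψ = fun I => (mrk M (⋃ i ∈ I, A i) : ℝ) / c}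

/-- A lattice embedding between the lattices of flats of two matroids: an injective map
sending flats to flats and preserving meets (intersections) and joins (closures of
unions). -/
def IsLatticeEmb {α : Type*} (M M' : Matroid α) (Λ : Set α → Set α) : Prop :=
  (∀ F, M.IsFlat F → M'.IsFlat (Λ F)) ∧
  (∀ F₁ F₂, M.IsFlat F₁ → M.IsFlat F₂ → Λ F₁ = Λ F₂ → F₁ = F₂) ∧
  (∀ F₁ F₂, M.IsFlat F₁ → M.IsFlat F₂ → Λ (F₁ ∩ F₂) = Λ F₁ ∩ Λ F₂) ∧
  (∀ F₁ F₂, M.IsFlat F₁ → M.IsFlat F₂ →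
    Λ (M.closure (F₁ ∪ F₂)) = M'.closure (Λ F₁ ∪ Λ F₂))

open Set Filter Topology Metric Matroid

section HausdorffLimit

variable {X ι : Type*} [PseudoMetricSpace X] {l : Filter ι}

theorem tendsto_hausdorffDist_closure {T : ι → Set X} {U : Set X} (hU : TotallyBounded U)
    (hTU : ∀ᶠ i in l, T i ⊆ closure U)
    (happrox : ∀ x ∈ U, ∀ ε > 0, ∀ᶠ i in l, ∃ y ∈ T i, dist x y ≤ ε) :
    Tendsto (fun i => hausdorffDist (T i) (closure U)) l (𝓝 0) := by
  refine Metric.tendsto_nhds.2 fun ε hε => ?_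
  obtain ⟨t, htU, htfin, hcover⟩ := finite_approx_of_totallyBounded hU (ε / 4) (by positivity)
  have hnear : ∀ᶠ i in l, ∀ x ∈ t, ∃ y ∈ T i, dist x y ≤ ε / 4 :=
    htfin.eventually_all.2 fun x hx => happrox x (htU hx) _ (by positivity)
  filter_upwards [hTU, hnear] with i hsub hnear
  rw [Real.dist_0_eq_abs, abs_of_nonneg hausdorffDist_nonneg]
  refine (hausdorffDist_le_of_mem_dist (r := 3 * (ε / 4)) (by positivity)
    (fun p hp => ⟨p, hsub hp, by simp only [dist_self]; positivity⟩) fun p hp => ?_).trans_lt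
    (by linarith)
  obtain ⟨u, huU, hpu⟩ := Metric.mem_closure_iff.1 hp (ε / 4) (by positivity)
  obtain ⟨x, hxt, hux⟩ := mem_iUnion₂.1 (hcover huU)
  obtain ⟨y, hyT, hxy⟩ := hnear x hxt
  refine ⟨y, hyT, ?_⟩
  calc dist p y ≤ dist p u + dist u x + dist x y := dist_triangle4 _ _ _ _
    _ ≤ 3 * (ε / 4) := by rw [mem_ball] at hux; linarith

end HausdorffLimit

section Rank

variable {α : Type*} {M : Matroid α} [M.RankFinite] {I X Y : Set α}

lemma Matroid.IsBasis'.mrk_eq_ncard (hI : M.IsBasis' I X) : mrk M X = I.ncard := by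
  have hbdd : ∀ n ∈ ncard '' {J | M.Indep J ∧ J ⊆ X}, n ≤ I.ncard := by
    rintro _ ⟨J, ⟨hJ, hJX⟩, rfl⟩
    refine (Nat.cast_le (α := ℕ∞)).1 ?_
    rw [hJ.finite.cast_ncard_eq, hI.indep.finite.cast_ncard_eq, ← hI.eRk_eq_encard]
    exact hJ.encard_le_eRk_of_subset hJX
  exact le_antisymm (csSup_le ⟨_, I, ⟨hI.indep, hI.subset⟩, rfl⟩ hbdd)
    (le_csSup ⟨_, hbdd⟩ ⟨I, ⟨hI.indep, hI.subset⟩, rfl⟩)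

lemma cast_mrk (M : Matroid α) [M.RankFinite] (X : Set α) : (mrk M X : ℕ∞) = M.eRk X := by
  obtain ⟨I, hI⟩ := M.exists_isBasis' X
  rw [hI.mrk_eq_ncard, hI.eRk_eq_encard, hI.indep.finite.cast_ncard_eq]

lemma mrk_closure (X : Set α) : mrk M (M.closure X) = mrk M X := by
  rw [← Nat.cast_inj (R := ℕ∞), cast_mrk, cast_mrk, eRk_closure_eq]

lemma mrk_mono (hXY : X ⊆ Y) : mrk M X ≤ mrk M Y := by
  rw [← Nat.cast_le (α := ℕ∞), cast_mrk, cast_mrk]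
  exact M.eRk_mono hXY

lemma mrk_empty : mrk M ∅ = 0 := by
  rw [← Nat.cast_inj (R := ℕ∞), cast_mrk, eRk_empty, Nat.cast_zero]

end Rank

namespace IsLatticeEmb

variable {α ι : Type*} {M M' : Matroid α} {Λ : Set α → Set α}

lemma isFlat (hΛ : IsLatticeEmb M M' Λ) {F : Set α} (hF : M.IsFlat F) : M'.IsFlat (Λ F) :=
  hΛ.1 F hF

lemma map_closure_union (hΛ : IsLatticeEmb M M' Λ) {F₁ F₂ : Set α} (hF₁ : M.IsFlat F₁)
    (hF₂ : M.IsFlat F₂) : Λ (M.closure (F₁ ∪ F₂)) = M'.closure (Λ F₁ ∪ Λ F₂) :=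
  hΛ.2.2.2 F₁ F₂ hF₁ hF₂

lemma closure_biUnion_map_closure (hΛ : IsLatticeEmb M M' Λ) (A : ι → Set α) {s : Finset ι}
    (hs : s.Nonempty) :
    M'.closure (⋃ i ∈ s, Λ (M.closure (A i))) = Λ (M.closure (⋃ i ∈ s, A i)) := by
  classical
  induction hs using Finset.Nonempty.cons_induction with
  | singleton a => simpa using (hΛ.isFlat (M.isFlat_closure (A a))).closure
  | cons a s ha hs ih =>
    rw [Finset.cons_eq_insert, Finset.set_biUnion_insert, Finset.set_biUnion_insert,
      ← closure_union_closure_right_eq, ih,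
      ← hΛ.map_closure_union (M.isFlat_closure _) (M.isFlat_closure _),
      closure_union_closure_right_eq, closure_union_closure_left_eq]

lemma matCrops_subset [M.RankFinite] [M'.RankFinite] (hΛ : IsLatticeEmb M M' Λ) {c c' : ℝ}
    (hρ : ∀ F, M.IsFlat F → (mrk M' (Λ F) : ℝ) / c' = (mrk M F : ℝ) / c) {k : ℕ} :
    matCrops M c k ⊆ matCrops M' c' k := by
  rintro _ ⟨A, -, rfl⟩
  refine ⟨fun i => Λ (M.closure (A i)), fun i => (hΛ.isFlat (M.isFlat_closure _)).subset_ground,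
    funext fun s => ?_⟩
  -- `Λ` need not send the loops of `M` to those of `M'`, so the empty union is handled apart.
  rcases s.eq_empty_or_nonempty with rfl | hs
  · simp [mrk_empty]
  · dsimp only
    rw [← mrk_closure (M := M'), hΛ.closure_biUnion_map_closure A hs, hρ _ (M.isFlat_closure _),
      mrk_closure]

end IsLatticeEmb

section Crops

variable {α : Type*} {M : Matroid α} [M.RankFinite] {k : ℕ}

lemma matCrops_subset_closedBall {c : ℝ} (hc : 0 ≤ c) :
    matCrops M c k ⊆ closedBall 0 (mrk M M.E / c) := by
  rintro _ ⟨A, hA, rfl⟩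
  rw [mem_closedBall_zero_iff, pi_norm_le_iff_of_nonneg (by positivity)]
  intro s
  rw [Real.norm_of_nonneg (by positivity)]
  gcongr
  exact mrk_mono (iUnion₂_subset fun i _ => hA i)

lemma exists_mem_matCrops_dist_le {c c' : ℝ} (hc : 0 < c) (hcc' : c ≤ c')
    (hE : (mrk M M.E : ℝ) ≤ c) {ψ : Finset (Fin k) → ℝ} (hψ : ψ ∈ matCrops M c k) :
    ∃ φ ∈ matCrops M c' k, dist ψ φ ≤ 1 - c / c' := by
  obtain ⟨A, hA, rfl⟩ := hψ
  have hc' : 0 < c' := hc.trans_le hcc'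
  have hgap : 0 ≤ 1 - c / c' := sub_nonneg.2 ((div_le_one hc').2 hcc')
  refine ⟨_, ⟨A, hA, rfl⟩, (dist_pi_le_iff hgap).2 fun s => ?_⟩
  set x : ℝ := (mrk M (⋃ i ∈ s, A i) : ℝ)
  have hx : x / c ≤ 1 :=
    (div_le_one hc).2 <| (Nat.cast_le.2 (mrk_mono (iUnion₂_subset fun i _ => hA i))).trans hE
  have hsplit : x / c - x / c' = x / c * (1 - c / c') := by field_simp
  rw [Real.dist_eq, hsplit, abs_of_nonneg (by positivity)]
  exact mul_le_of_le_one_left hgap hx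

end Crops

section Sequence

variable {α : Type*} {M : ℕ → Matroid α} [∀ n, (M n).RankFinite] {k : ℕ}

lemma exists_mem_matCrops_dist_le_div (hrank : ∀ n, 1 ≤ n → mrk (M n) (M n).E = n)
    (hRP : ∀ m n, 1 ≤ m → m ≤ n → ∃ Λ, IsLatticeEmb (M m) (M n) Λ ∧
      ∀ F, (M m).IsFlat F → mrk (M n) (Λ F) = mrk (M m) F)
    (hStretch : ∀ m n, 1 ≤ m → m ∣ n → ∃ Λ, IsLatticeEmb (M m) (M n) Λ ∧
      ∀ F, (M m).IsFlat F →
        (mrk (M n) (Λ F) : ℝ) / (n : ℝ) = (mrk (M m) F : ℝ) / (m : ℝ))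
    {m n : ℕ} (hm : 1 ≤ m) (hmn : m ≤ n) {ψ : Finset (Fin k) → ℝ}
    (hψ : ψ ∈ matCrops (M m) m k) :
    ∃ φ ∈ matCrops (M n) n k, dist ψ φ ≤ m / n := by
  set q := n / m
  have hq : 1 ≤ q * m := Nat.one_le_iff_ne_zero.2 <|
    Nat.mul_ne_zero (Nat.div_pos hmn hm).ne' (by omega)
  have hqn : q * m ≤ n := Nat.div_mul_le_self n m
  obtain ⟨Λ, hΛ, hρ⟩ := hStretch m (q * m) hm (dvd_mul_left m q)
  obtain ⟨Λ', hΛ', hr⟩ := hRP (q * m) n hq hqn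
  obtain ⟨φ, hφ, hdist⟩ := exists_mem_matCrops_dist_le (c' := n) (by exact_mod_cast hq)
    (by exact_mod_cast hqn) (by rw [hrank _ hq]) (hΛ.matCrops_subset hρ hψ)
  refine ⟨φ, hΛ'.matCrops_subset (fun F hF => by rw [hr F hF]) hφ, hdist.trans ?_⟩
  have hn : (0 : ℝ) < n := by exact_mod_cast hm.trans hmn
  rw [one_sub_div hn.ne', div_le_div_iff_of_pos_right hn, sub_le_iff_le_add]
  exact_mod_cast (Nat.lt_div_mul_add (a := n) hm).le.trans_eq (add_comm _ _)

end Sequence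

/-- Let `(Mₙ)` be matroids with `rₙ(Eₙ) = n`, such that (i) for `m ≤ n`
there is a rank-preserving lattice embedding `𝓛_m → 𝓛_n`, and (ii) for `m ∣ n` there is
a stretch embedding `𝓛_m → 𝓛_n`. Then for every `k`, the `k`-crop sets `T_k(ρₙ)`
converge in the Hausdorff distance to the closure of their union. -/
theorem stmt6 {α : Type*} (M : ℕ → Matroid α) [∀ n, (M n).Finite]
    (hrank : ∀ n, 1 ≤ n → mrk (M n) (M n).E = n)
    (hRP : ∀ m n, 1 ≤ m → m ≤ n → ∃ Λ, IsLatticeEmb (M m) (M n) Λ ∧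
      ∀ F, (M m).IsFlat F → mrk (M n) (Λ F) = mrk (M m) F)
    (hStretch : ∀ m n, 1 ≤ m → m ∣ n → ∃ Λ, IsLatticeEmb (M m) (M n) Λ ∧
      ∀ F, (M m).IsFlat F →
        (mrk (M n) (Λ F) : ℝ) / (n : ℝ) = (mrk (M m) F : ℝ) / (m : ℝ))
    (k : ℕ) :
    Filter.Tendsto
      (fun n => Metric.hausdorffDist (matCrops (M n) (n : ℝ) k)
        (closure (⋃ n, ⋃ (_ : 1 ≤ n), matCrops (M n) (n : ℝ) k)))
      Filter.atTop (nhds 0) := by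
  set U := ⋃ n, ⋃ (_ : 1 ≤ n), matCrops (M n) (n : ℝ) k
  have hU : U ⊆ closedBall 0 1 := iUnion₂_subset fun n hn =>
    (matCrops_subset_closedBall n.cast_nonneg).trans
      (closedBall_subset_closedBall (by rw [hrank n hn]; exact div_self_le_one _))
  refine tendsto_hausdorffDist_closure ((isCompact_closedBall 0 1).totallyBounded.subset hU)
    ?_ fun ψ hψ ε hε => ?_
  · filter_upwards [eventually_ge_atTop 1] with n hn
    exact (subset_iUnion₂ (s := fun n (_ : 1 ≤ n) => matCrops (M n) n k) n hn).trans
      subset_closure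
  · obtain ⟨m, hm, hψm⟩ := mem_iUnion₂.1 hψ
    have hsmall : ∀ᶠ n : ℕ in atTop, (m : ℝ) / n ≤ ε :=
      (tendsto_const_div_atTop_nhds_zero_nat (m : ℝ)).eventually (ge_mem_nhds hε)
    filter_upwards [eventually_ge_atTop m, hsmall] with n hmn hmn_small
    obtain ⟨φ, hφ, hdist⟩ := exists_mem_matCrops_dist_le_div hrank hRP hStretch hm hmn hψm
    exact ⟨φ, hφ, hdist.trans hmn_small⟩
end

section
/- Let M = (E, r) be a finite matroid satisfying condition R(k,m): for any two flats F ⊆ A with r(A) ≥ m, |A \ F| ≥ k·(r(A) − r(F)). Let A₁,…,A_k be flats of M with r(A_i) ≥ m for every i ∈ [k]. Then there exist pairwise disjoint subsets B_i ⊆ A_i such that each B_i is a basis of A_i (an independent set of size r(A_i)). -/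
/-!
Put `g(Y) = |Y| + Σᵢ r(Aᵢ \ Y)`. Condition `R(k,m)`, applied to the flats `cl(Aᵢ \ Y) ⊆ Aᵢ`,
gives `k · (r(Aᵢ) - r(Aᵢ \ Y)) ≤ |Y|` for each of the `k` indices, hence `Σᵢ r(Aᵢ) ≤ g(Y)`.
It remains to prove the hard half of the matroid partition theorem: if `n ≤ g(Y)` for all `Y`,
there are disjoint independent `Iᵢ ⊆ Aᵢ` with `n ≤ Σᵢ |Iᵢ|`. This goes by induction on
`Σᵢ |Aᵢ|`, as in Halmos and Vaughan's proof of Hall's theorem. If the `Aᵢ` are disjoint, take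
bases. Otherwise some `e` lies in `Aᵢ ∩ Aⱼ`, and `n ≤ g` survives deleting `e` from `Aᵢ` or from
`Aⱼ`: by submodularity of the rank, violators `Y₁` and `Y₂` of the two smaller families would make
`Y₁ ∩ Y₂` or `Y₁ ∪ Y₂ ∪ {e}` a violator for the original one.
-/

open Set

lemma Finset.sum_le_of_forall_card_mul_le {ι : Type*} {s : Finset ι} {x : ι → ℕ} {c : ℕ}
    (h : ∀ i ∈ s, s.card * x i ≤ c) : ∑ i ∈ s, x i ≤ c := by
  rcases s.card.eq_zero_or_pos with hs | hs
  · simp [Finset.card_eq_zero.mp hs]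
  refine Nat.le_of_mul_le_mul_left ?_ hs
  calc s.card * ∑ i ∈ s, x i = ∑ i ∈ s, s.card * x i := Finset.mul_sum _ _ _
    _ ≤ ∑ _i ∈ s, c := Finset.sum_le_sum h
    _ = s.card * c := by rw [Finset.sum_const, smul_eq_mul]

section EraseAt

variable {ι α : Type*} [DecidableEq ι] (A : ι → Set α) (i : ι) (e : α) {l : ι}

def eraseAt : ι → Set α :=
  Function.update A i (A i \ {e})

@[simp] lemma eraseAt_self : eraseAt A i e i = A i \ {e} :=
  Function.update_self ..

lemma eraseAt_of_ne (hl : l ≠ i) : eraseAt A i e l = A l :=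
  Function.update_of_ne hl ..

lemma eraseAt_subset (l : ι) : eraseAt A i e l ⊆ A l := by
  obtain rfl | hl := eq_or_ne l i
  exacts [(eraseAt_self A l e).trans_subset sdiff_subset, (eraseAt_of_ne A i e hl).subset]

lemma diff_singleton_subset_eraseAt (l : ι) : A l \ {e} ⊆ eraseAt A i e l := by
  obtain rfl | hl := eq_or_ne l i
  exacts [(eraseAt_self A l e).symm.subset, (eraseAt_of_ne A i e hl).symm ▸ sdiff_subset]

lemma eraseAt_sdiff_of_mem {Y : Set α} (he : e ∈ Y) (l : ι) : eraseAt A i e l \ Y = A l \ Y := by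
  obtain rfl | hl := eq_or_ne l i
  · rw [eraseAt_self, sdiff_sdiff, singleton_union, insert_eq_of_mem he]
  · rw [eraseAt_of_ne A i e hl]

end EraseAt

namespace Matroid

variable {α : Type*} {M : Matroid α} {I X Y : Set α}

section PartitionBound

variable {ι : Type*} [Fintype ι]

/-- For disjoint independent `Iᵢ ⊆ Aᵢ`, every `partitionBound M A Y` bounds `Σᵢ |Iᵢ|` from
above; the matroid partition theorem says that the least of these bounds is attained. -/
noncomputable def partitionBound (M : Matroid α) (A : ι → Set α) (Y : Set α) : ℕ :=
  Y.ncard + ∑ i, mrk M (A i \ Y)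

lemma partitionBound_eraseAt_of_mem [DecidableEq ι] {A : ι → Set α} {i : ι} {e : α}
    (he : e ∈ Y) : partitionBound M (eraseAt A i e) Y = partitionBound M A Y := by
  simp only [partitionBound, eraseAt_sdiff_of_mem A i e he]

end PartitionBound

variable [M.Finite]

lemma IsBasis'.mrk_eq_ncard_s8 (hI : M.IsBasis' I X) : mrk M X = I.ncard := by
  refine IsGreatest.csSup_eq ⟨⟨I, ⟨hI.indep, hI.subset⟩, rfl⟩, ?_⟩
  rintro _ ⟨J, ⟨hJ, hJX⟩, rfl⟩
  have hIJ := (hJ.encard_le_eRk_of_subset hJX).trans_eq hI.encard_eq_eRk.symm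
  rwa [← (M.set_finite I hI.indep.subset_ground).cast_ncard_eq,
    ← (M.set_finite J hJ.subset_ground).cast_ncard_eq, Nat.cast_le] at hIJ

variable (M) in
lemma cast_mrk (X : Set α) : (mrk M X : ℕ∞) = M.eRk X := by
  obtain ⟨I, hI⟩ := M.exists_isBasis' X
  rw [hI.mrk_eq_ncard_s8, (M.set_finite I hI.indep.subset_ground).cast_ncard_eq, hI.encard_eq_eRk]

variable (M) in
lemma mrk_closure (X : Set α) : mrk M (M.closure X) = mrk M X := by
  exact_mod_cast (M.cast_mrk _).trans ((M.eRk_closure_eq X).trans (M.cast_mrk X).symm)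

lemma mrk_add_mrk_le_of_subset {P Q : Set α} (hX : X ⊆ P ∪ Q) (hY : Y ⊆ P ∩ Q) :
    mrk M X + mrk M Y ≤ mrk M P + mrk M Q := by
  have h := (add_le_add (M.eRk_mono hX) (M.eRk_mono hY)).trans
    ((add_comm _ _).trans_le (M.eRk_inter_add_eRk_union_le P Q))
  simp only [← cast_mrk] at h
  exact_mod_cast h

lemma Indep.ncard_le_mrk (hI : M.Indep I) (hIX : I ⊆ X) : I.ncard ≤ mrk M X := by
  have h := hI.encard_le_eRk_of_subset hIX
  rwa [← (M.set_finite I hI.subset_ground).cast_ncard_eq, ← cast_mrk, Nat.cast_le] at h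

lemma Indep.isBasis_of_mrk_le (hI : M.Indep I) (hIX : I ⊆ X) (hX : X ⊆ M.E)
    (h : mrk M X ≤ I.ncard) : M.IsBasis I X := by
  refine hI.isBasis_of_eRk_ge (M.set_finite I hI.subset_ground) hIX ?_ hX
  rw [← cast_mrk, ← cast_mrk, hI.isBasis_self.isBasis'.mrk_eq_ncard_s8]
  exact_mod_cast h

lemma mrk_sdiff_inter_add_mrk_sdiff_insert_union_le {A A₁ A₂ Y₁ Y₂ : Set α} {e : α}
    (h₁ : A \ {e} ⊆ A₁) (h₂ : A \ {e} ⊆ A₂) (h : A ⊆ A₁ ∪ A₂) (he₁ : e ∉ Y₁) (he₂ : e ∉ Y₂) :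
    mrk M (A \ (Y₁ ∩ Y₂)) + mrk M (A \ insert e (Y₁ ∪ Y₂)) ≤
      mrk M (A₁ \ Y₁) + mrk M (A₂ \ Y₂) := by
  refine mrk_add_mrk_le_of_subset (fun x hx => ?_) (fun x hx => ?_)
  · obtain rfl | hxe := eq_or_ne x e
    · rcases h hx.1 with h' | h'
      exacts [Or.inl ⟨h', he₁⟩, Or.inr ⟨h', he₂⟩]
    · have hx' : x ∈ A \ {e} := ⟨hx.1, hxe⟩
      by_cases hx₁ : x ∈ Y₁
      exacts [Or.inr ⟨h₂ hx', fun hx₂ => hx.2 ⟨hx₁, hx₂⟩⟩, Or.inl ⟨h₁ hx', hx₁⟩]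
  · simp only [mem_sdiff, mem_insert_iff, mem_union, not_or] at hx
    exact ⟨⟨h₁ ⟨hx.1, hx.2.1⟩, hx.2.2.1⟩, ⟨h₂ ⟨hx.1, hx.2.1⟩, hx.2.2.2⟩⟩

section Partition

variable {ι : Type*} [Fintype ι] [DecidableEq ι]

lemma partitionBound_inter_add_partitionBound_insert_union_le {A : ι → Set α} {e : α}
    {Y₁ Y₂ : Set α} {i j : ι} (hij : i ≠ j) (hY₁ : Y₁.Finite) (hY₂ : Y₂.Finite)
    (he₁ : e ∉ Y₁) (he₂ : e ∉ Y₂) :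
    partitionBound M A (Y₁ ∩ Y₂) + partitionBound M A (insert e (Y₁ ∪ Y₂)) ≤
      partitionBound M (eraseAt A i e) Y₁ + partitionBound M (eraseAt A j e) Y₂ + 1 := by
  have hcard : (Y₁ ∩ Y₂).ncard + (insert e (Y₁ ∪ Y₂)).ncard ≤ Y₁.ncard + Y₂.ncard + 1 := by
    have := ncard_inter_add_ncard_union Y₁ Y₂ hY₁ hY₂
    have := ncard_insert_le e (Y₁ ∪ Y₂)
    omega
  have hrk : ∀ l, mrk M (A l \ (Y₁ ∩ Y₂)) + mrk M (A l \ insert e (Y₁ ∪ Y₂)) ≤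
      mrk M (eraseAt A i e l \ Y₁) + mrk M (eraseAt A j e l \ Y₂) := fun l => by
    refine mrk_sdiff_inter_add_mrk_sdiff_insert_union_le (diff_singleton_subset_eraseAt A i e l)
      (diff_singleton_subset_eraseAt A j e l) ?_ he₁ he₂
    obtain rfl | hl := eq_or_ne l i
    · rw [eraseAt_of_ne A j e hij]; exact subset_union_right
    · rw [eraseAt_of_ne A i e hl]; exact subset_union_left
  have := Finset.sum_le_sum fun l (_ : l ∈ Finset.univ) => hrk l
  simp only [Finset.sum_add_distrib] at this
  unfold partitionBound
  omega

lemma le_partitionBound_eraseAt {A : ι → Set α} {n : ℕ}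
    (h : ∀ Y ⊆ M.E, n ≤ partitionBound M A Y) {i j : ι} (hij : i ≠ j) {e : α} (he : e ∈ M.E) :
    (∀ Y ⊆ M.E, n ≤ partitionBound M (eraseAt A i e) Y) ∨
      ∀ Y ⊆ M.E, n ≤ partitionBound M (eraseAt A j e) Y := by
  by_contra! ⟨⟨Y₁, hY₁, h₁⟩, ⟨Y₂, hY₂, h₂⟩⟩
  have he₁ : e ∉ Y₁ := fun heY =>
    (h Y₁ hY₁).not_gt (by rwa [partitionBound_eraseAt_of_mem heY] at h₁)
  have he₂ : e ∉ Y₂ := fun heY =>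
    (h Y₂ hY₂).not_gt (by rwa [partitionBound_eraseAt_of_mem heY] at h₂)
  have := partitionBound_inter_add_partitionBound_insert_union_le (M := M) (A := A) hij
    (M.set_finite Y₁ hY₁) (M.set_finite Y₂ hY₂) he₁ he₂
  have := h (Y₁ ∩ Y₂) (inter_subset_left.trans hY₁)
  have := h (insert e (Y₁ ∪ Y₂)) (insert_subset he (union_subset hY₁ hY₂))
  omega

lemma exists_lt_sum_ncard_le_partitionBound {A : ι → Set α} {n : ℕ} (hA : ∀ i, A i ⊆ M.E)
    (hA' : ¬ Pairwise (Function.onFun Disjoint A)) (h : ∀ Y ⊆ M.E, n ≤ partitionBound M A Y) :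
    ∃ A' : ι → Set α, (∀ i, A' i ⊆ A i) ∧ ∑ i, (A' i).ncard < ∑ i, (A i).ncard ∧
      ∀ Y ⊆ M.E, n ≤ partitionBound M A' Y := by
  obtain ⟨i, j, hij, hAij⟩ : ∃ i j, i ≠ j ∧ ¬ Disjoint (A i) (A j) := by
    simpa [Pairwise, Function.onFun] using hA'
  obtain ⟨e, hei, hej⟩ := not_disjoint_iff.mp hAij
  have hlt : ∀ l, e ∈ A l → ∑ i, (eraseAt A l e i).ncard < ∑ i, (A i).ncard := fun l hel =>
    Finset.sum_lt_sum (fun i _ => ncard_le_ncard (eraseAt_subset A l e i) (M.set_finite _ (hA i)))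
      ⟨l, Finset.mem_univ l, by
        simpa using ncard_sdiff_singleton_lt_of_mem hel (M.set_finite _ (hA l))⟩
  rcases le_partitionBound_eraseAt h hij (hA i hei) with h' | h'
  exacts [⟨_, eraseAt_subset A i e, hlt i hei, h'⟩, ⟨_, eraseAt_subset A j e, hlt j hej, h'⟩]

theorem exists_pairwise_disjoint_indep_of_le_partitionBound (A : ι → Set α)
    (hA : ∀ i, A i ⊆ M.E) (n : ℕ) (h : ∀ Y ⊆ M.E, n ≤ partitionBound M A Y) :
    ∃ I : ι → Set α, Pairwise (Function.onFun Disjoint I) ∧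
      (∀ i, M.Indep (I i) ∧ I i ⊆ A i) ∧ n ≤ ∑ i, (I i).ncard := by
  induction hs : ∑ i, (A i).ncard using Nat.strong_induction_on generalizing A with
  | _ s ih =>
  by_cases hdisj : Pairwise (Function.onFun Disjoint A)
  · choose B hB using fun i => M.exists_isBasis (A i) (hA i)
    refine ⟨B, fun i j hij => (hdisj hij).mono (hB i).subset (hB j).subset,
      fun i => ⟨(hB i).indep, (hB i).subset⟩, ?_⟩
    have := h ∅ (empty_subset _)
    simp only [partitionBound, ncard_empty, sdiff_empty, zero_add] at this
    rwa [Finset.sum_congr rfl fun i _ => (hB i).isBasis'.mrk_eq_ncard_s8] at this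
  obtain ⟨A', hA'A, hlt, h'⟩ := exists_lt_sum_ncard_le_partitionBound hA hdisj h
  obtain ⟨I, hI, hIA, hn⟩ := ih _ (hs ▸ hlt) A' (fun i => (hA'A i).trans (hA i)) h' rfl
  exact ⟨I, hI, fun i => ⟨(hIA i).1, (hIA i).2.trans (hA'A i)⟩, hn⟩

end Partition

lemma mul_sub_mrk_sdiff_le_ncard {k m : ℕ}
    (hR : ∀ F A : Set α, M.IsFlat F → M.IsFlat A → F ⊆ A → m ≤ mrk M A →
      k * (mrk M A - mrk M F) ≤ (A \ F).ncard)
    {A : Set α} (hA : M.IsFlat A) (hAm : m ≤ mrk M A) (hY : Y.Finite) :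
    k * (mrk M A - mrk M (A \ Y)) ≤ Y.ncard := by
  have hAY : A \ Y ⊆ M.closure (A \ Y) := M.subset_closure _ (sdiff_subset.trans hA.subset_ground)
  calc k * (mrk M A - mrk M (A \ Y)) = k * (mrk M A - mrk M (M.closure (A \ Y))) := by
        rw [mrk_closure]
    _ ≤ (A \ M.closure (A \ Y)).ncard :=
        hR _ _ (M.isFlat_closure _) hA
          ((M.closure_subset_closure sdiff_subset).trans hA.closure.subset) hAm
    _ ≤ Y.ncard := ncard_le_ncard (fun x hx => by_contra fun hxY => hx.2 (hAY ⟨hx.1, hxY⟩)) hY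

lemma sum_mrk_le_partitionBound {k m : ℕ}
    (hR : ∀ F A : Set α, M.IsFlat F → M.IsFlat A → F ⊆ A → m ≤ mrk M A →
      k * (mrk M A - mrk M F) ≤ (A \ F).ncard)
    {A : Fin k → Set α} (hA : ∀ i, M.IsFlat (A i)) (hAm : ∀ i, m ≤ mrk M (A i))
    (hY : Y.Finite) : ∑ i, mrk M (A i) ≤ partitionBound M A Y := by
  have hdeficit : ∑ i, (mrk M (A i) - mrk M (A i \ Y)) ≤ Y.ncard :=
    Finset.sum_le_of_forall_card_mul_le fun i _ => by
      simpa using mul_sub_mrk_sdiff_le_ncard hR (hA i) (hAm i) hY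
  have hsplit := Finset.sum_le_sum fun i (_ : i ∈ Finset.univ) =>
    le_add_tsub (a := mrk M (A i)) (b := mrk M (A i \ Y))
  rw [Finset.sum_add_distrib] at hsplit
  unfold partitionBound
  omega

end Matroid

/-- Let `M` be a finite matroid satisfying `R(k,m)`: for any flats
`F ⊆ A` with `r(A) ≥ m`, `|A \ F| ≥ k·(r(A) − r(F))`. If `A₁,…,A_k` are flats with
`r(Aᵢ) ≥ m` for all `i`, then there are pairwise disjoint sets `Bᵢ ⊆ Aᵢ` such that
`Bᵢ` is a basis of `Aᵢ` for every `i`. -/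
theorem stmt8 {α : Type*} (M : Matroid α) [M.Finite] (k m : ℕ)
    (hR : ∀ F A : Set α, M.IsFlat F → M.IsFlat A → F ⊆ A → m ≤ mrk M A →
      k * (mrk M A - mrk M F) ≤ (A \ F).ncard)
    (A : Fin k → Set α) (hA : ∀ i, M.IsFlat (A i)) (hAm : ∀ i, m ≤ mrk M (A i)) :
    ∃ B : Fin k → Set α, Pairwise (Function.onFun Disjoint B) ∧
      ∀ i, M.IsBasis (B i) (A i) := by
  obtain ⟨I, hdisj, hI, hsum⟩ := M.exists_pairwise_disjoint_indep_of_le_partitionBound A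
    (fun i => (hA i).subset_ground) _
    fun Y hY => Matroid.sum_mrk_le_partitionBound hR hA hAm (M.set_finite Y hY)
  have hle : ∀ i, (I i).ncard ≤ mrk M (A i) := fun i => (hI i).1.ncard_le_mrk (hI i).2
  have heq := (Finset.sum_eq_sum_iff_of_le fun i _ => hle i).1
    (le_antisymm (Finset.sum_le_sum fun i _ => hle i) hsum)
  exact ⟨I, hdisj, fun i => (hI i).1.isBasis_of_mrk_le (hI i).2 (hA i).subset_ground
    (heq i (Finset.mem_univ i)).ge⟩
end
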